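/- If a C¹ vector field A = (A₁, A₂) on ℝ² (or on any simply connected open set) satisfies curl₃ A = ∂x A₂ - ∂y A₁ = 0 everywhere, then there exists a function f with A = grad f, i.e. A₁ = ∂x f and A₂ = ∂y f. -/

import Mathlib

noncomputable def pdx (f : ℝ × ℝ → ℝ) (p : ℝ × ℝ) : ℝ := fderiv ℝ f p (1, 0)
noncomputable def pdy (f : ℝ × ℝ → ℝ) (p : ℝ × ℝ) : ℝ := fderiv ℝ f p (0, 1)

/-!
Pairing `A` with the dot product turns it into the 1-form `ω = A₁ dx + A₂ dy`. The derivative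
`dω p x y = ⟨DA(p) x, y⟩` is symmetric in `x, y` exactly when the Jacobian of `A` is symmetric,
i.e. when the curl vanishes. A closed 1-form on a convex open set is exact: integrating `ω` along
segments from a base point gives a potential (`Convex.exists_forall_hasFDerivAt_of_fderiv_symmetric`).
-/

open ContinuousLinearMap

noncomputable def dotL : ℝ × ℝ →L[ℝ] ℝ × ℝ →L[ℝ] ℝ :=
  (fst ℝ ℝ ℝ).smulRight (fst ℝ ℝ ℝ) + (snd ℝ ℝ ℝ).smulRight (snd ℝ ℝ ℝ)

@[simp]
lemma dotL_apply (v w : ℝ × ℝ) : dotL v w = v.1 * w.1 + v.2 * w.2 := by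
  simp [dotL]

lemma dotL_apply_comm_of_symmetric (D : ℝ × ℝ →L[ℝ] ℝ × ℝ) (hD : (D (0, 1)).1 = (D (1, 0)).2)
    (x y : ℝ × ℝ) : dotL (D x) y = dotL (D y) x := by
  have hsplit : ∀ z : ℝ × ℝ, D z = z.1 • D (1, 0) + z.2 • D (0, 1) := fun z => by
    rw [← map_smul, ← map_smul, ← map_add]
    simp
  simp only [dotL_apply, hsplit x, hsplit y, Prod.fst_add, Prod.snd_add, Prod.smul_fst,
    Prod.smul_snd, smul_eq_mul, hD]
  ring

section Partials

variable {A : ℝ × ℝ → ℝ × ℝ} {p : ℝ × ℝ}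

lemma pdx_snd_eq_fderiv (hA : DifferentiableAt ℝ A p) :
    pdx (fun q => (A q).2) p = (fderiv ℝ A p (1, 0)).2 := by
  simp [pdx, fderiv.snd hA]

lemma pdy_fst_eq_fderiv (hA : DifferentiableAt ℝ A p) :
    pdy (fun q => (A q).1) p = (fderiv ℝ A p (0, 1)).1 := by
  simp [pdy, fderiv.fst hA]

lemma hasFDerivAt_dotL_comp (hA : DifferentiableAt ℝ A p) :
    HasFDerivAt (fun q => dotL (A q)) (dotL.comp (fderiv ℝ A p)) p :=
  dotL.hasFDerivAt.comp p hA.hasFDerivAt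

lemma fderiv_dotL_comp_apply_comm (hA : DifferentiableAt ℝ A p)
    (hcurl : pdx (fun q => (A q).2) p - pdy (fun q => (A q).1) p = 0) (x y : ℝ × ℝ) :
    fderiv ℝ (fun q => dotL (A q)) p x y = fderiv ℝ (fun q => dotL (A q)) p y x := by
  rw [(hasFDerivAt_dotL_comp hA).fderiv]
  refine dotL_apply_comm_of_symmetric _ ?_ x y
  linarith [pdx_snd_eq_fderiv hA, pdy_fst_eq_fderiv hA]

end Partials

/-- 2D Poincaré lemma: a C¹ curl-free vector field on ℝ² is a gradient. -/
theorem curl_free_is_gradient (A : ℝ × ℝ → ℝ × ℝ) (hA : ContDiff ℝ 1 A)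
    (hcurl : ∀ p, pdx (fun q => (A q).2) p - pdy (fun q => (A q).1) p = 0) :
    ∃ f : ℝ × ℝ → ℝ, ∀ p, (A p).1 = pdx f p ∧ (A p).2 = pdy f p := by
  have hdiff : Differentiable ℝ A := hA.differentiable one_ne_zero
  obtain ⟨f, hf⟩ := convex_univ.exists_forall_hasFDerivAt_of_fderiv_symmetric isOpen_univ
    (fun p _ => (hasFDerivAt_dotL_comp (hdiff p)).differentiableAt.differentiableWithinAt)
    (fun p _ => fderiv_dotL_comp_apply_comm (hdiff p) (hcurl p))
  exact ⟨f, fun p => by simp [pdx, pdy, (hf p trivial).fderiv]⟩
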